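/- arXiv:1709.07731 — 2 statements merged into one kernel-verified Lean document; each statement's English description precedes it below -/
import Mathlib

section
/- Let x, z ∈ R^N with ‖x‖_0 = s₁, ‖z‖_0 = s₂, s₂ ≥ s₁. Let S₂ = supp(z, s₂) be the support of the s₂ largest-magnitude entries of z, and let S∇ be the set of indices of the s₂ − s₁ smallest-magnitude elements of z among its support. Then ‖x_{S∇}‖ ≤ √2 ‖(x − z)_{S₂}‖ ≤ √2 ‖x − z‖. -/
/-!
Let `T` be the support of `x`, `A = S∇ ∩ T` and `B = (S₂ \ S∇) \ T`. Since `|T| = s₁ = |S₂ \ S∇|`,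
we have `|A| ≤ |B|`, and every `|z i|` with `i ∈ A` is at most every `|z j|` with `j ∈ B`, so
`∑_A z² ≤ ∑_B z² = ∑_B (x - z)²` as `x` vanishes on `B`. Together with `x² ≤ 2 (x - z)² + 2 z²`
on `A` this gives `‖x_{S∇}‖² = ∑_A x² ≤ 2 ∑_{A ∪ B} (x - z)² ≤ 2 ‖(x - z)_{S₂}‖²`.
-/

/-- Euclidean norm of a finitely-indexed real vector. -/
noncomputable def vecEnorm {ι : Type*} [Fintype ι] (v : ι → ℝ) : ℝ :=
  Real.sqrt (∑ i, v i ^ 2)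

/-- Restriction of a vector to an index set (zero outside the set). -/
def restrict {ι : Type*} [Fintype ι] [DecidableEq ι] (v : ι → ℝ) (S : Finset ι) : ι → ℝ :=
  fun i => if i ∈ S then v i else 0

section Restrict

variable {ι : Type*} [Fintype ι] [DecidableEq ι]

lemma sum_sq_restrict (v : ι → ℝ) (S : Finset ι) :
    ∑ i, restrict v S i ^ 2 = ∑ i ∈ S, v i ^ 2 := by
  simp [restrict, apply_ite (fun t : ℝ => t ^ 2), Finset.sum_ite_mem]

lemma vecEnorm_restrict (v : ι → ℝ) (S : Finset ι) :
    vecEnorm (restrict v S) = Real.sqrt (∑ i ∈ S, v i ^ 2) := by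
  rw [vecEnorm, sum_sq_restrict]

lemma vecEnorm_restrict_le (v : ι → ℝ) (S : Finset ι) :
    vecEnorm (restrict v S) ≤ vecEnorm v := by
  rw [vecEnorm_restrict, vecEnorm]
  exact Real.sqrt_le_sqrt <|
    Finset.sum_le_sum_of_subset_of_nonneg (Finset.subset_univ S) fun i _ _ => sq_nonneg (v i)

end Restrict

open Finset

lemma Finset.card_inter_le_card_sdiff {α : Type*} [DecidableEq α] {P R T : Finset α}
    (hPR : Disjoint P R) (hTR : #T ≤ #R) : #(P ∩ T) ≤ #(R \ T) := by
  have hunion : #(P ∩ T) + #(R ∩ T) ≤ #T := by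
    rw [← card_union_of_disjoint (hPR.mono inter_subset_left inter_subset_left)]
    exact card_le_card (union_subset inter_subset_right inter_subset_right)
  have := card_sdiff_add_card_inter R T
  omega

lemma Finset.sum_le_sum_of_card_le_of_forall_le {ι M : Type*} [AddCommMonoid M] [LinearOrder M]
    [IsOrderedAddMonoid M] {A B : Finset ι} {a b : ι → M} (hcard : #A ≤ #B)
    (hb : ∀ j ∈ B, 0 ≤ b j) (hab : ∀ i ∈ A, ∀ j ∈ B, a i ≤ b j) :
    ∑ i ∈ A, a i ≤ ∑ j ∈ B, b j := by
  rcases B.eq_empty_or_nonempty with rfl | hB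
  · rw [card_eq_zero.mp (Nat.le_zero.mp hcard), sum_empty, sum_empty]
  set m := B.inf' hB b
  calc ∑ i ∈ A, a i ≤ #A • m := sum_le_card_nsmul A a m fun i hi => le_inf' hB b (hab i hi)
    _ ≤ #B • m := nsmul_le_nsmul_left (le_inf' hB b hb) hcard
    _ ≤ ∑ j ∈ B, b j := card_nsmul_le_sum B b m fun j hj => inf'_le b hj

lemma sum_sq_le_two_mul_sum_sq_sub {ι : Type*} [DecidableEq ι] {x z : ι → ℝ}
    {S₂ Snabla T : Finset ι} (hxT : ∀ i ∉ T, x i = 0) (hT : #T ≤ #(S₂ \ Snabla))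
    (hsub : Snabla ⊆ S₂) (hsmall : ∀ i ∈ Snabla, ∀ j ∈ S₂ \ Snabla, |z i| ≤ |z j|) :
    ∑ i ∈ Snabla, x i ^ 2 ≤ 2 * ∑ i ∈ S₂, (x i - z i) ^ 2 := by
  set A := Snabla ∩ T
  set B := (S₂ \ Snabla) \ T
  have hAB : Disjoint A B :=
    disjoint_left.mpr fun i hiA hiB => (mem_sdiff.mp (mem_sdiff.mp hiB).1).2 (mem_inter.mp hiA).1
  have hABsub : A ∪ B ⊆ S₂ :=
    union_subset (inter_subset_left.trans hsub) (sdiff_subset.trans sdiff_subset)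
  have hsumA : ∑ i ∈ Snabla, x i ^ 2 = ∑ i ∈ A, x i ^ 2 := by
    refine (sum_subset inter_subset_left fun i hi hiA => ?_).symm
    rw [hxT i fun hiT => hiA (mem_inter.mpr ⟨hi, hiT⟩), sq, zero_mul]
  have hsumB : ∑ j ∈ B, z j ^ 2 = ∑ j ∈ B, (x j - z j) ^ 2 :=
    sum_congr rfl fun j hj => by rw [hxT j (mem_sdiff.mp hj).2, zero_sub, neg_sq]
  have hzAB : ∑ i ∈ A, z i ^ 2 ≤ ∑ j ∈ B, z j ^ 2 :=
    sum_le_sum_of_card_le_of_forall_le (card_inter_le_card_sdiff disjoint_sdiff hT)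
      (fun j _ => sq_nonneg (z j))
      fun i hi j hj => sq_le_sq.mpr (hsmall i (mem_inter.mp hi).1 j (mem_sdiff.mp hj).1)
  calc ∑ i ∈ Snabla, x i ^ 2 = ∑ i ∈ A, ((x i - z i) + z i) ^ 2 := by simp [hsumA]
    _ ≤ ∑ i ∈ A, 2 * ((x i - z i) ^ 2 + z i ^ 2) := sum_le_sum fun i _ => add_sq_le
    _ = 2 * (∑ i ∈ A, (x i - z i) ^ 2 + ∑ i ∈ A, z i ^ 2) := by rw [← mul_sum, sum_add_distrib]
    _ ≤ 2 * ∑ i ∈ A ∪ B, (x i - z i) ^ 2 := by rw [sum_union hAB]; linarith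
    _ ≤ 2 * ∑ i ∈ S₂, (x i - z i) ^ 2 := by gcongr

/-- Let `x, z` with `‖x‖₀ = s₁`, `‖z‖₀ = s₂`, `s₂ ≥ s₁`.  Let `S₂` be the support of
the `s₂` largest-magnitude entries of `z` (here the full support of `z`), and `S∇ ⊆ S₂`
the set of the `s₂ − s₁` smallest-magnitude elements of `z` in `S₂`.  Then
`‖x_{S∇}‖ ≤ √2 ‖(x − z)_{S₂}‖ ≤ √2 ‖x − z‖`. -/
theorem pruned_indices_bound {N : ℕ} (s₁ s₂ : ℕ) (hs : s₁ ≤ s₂)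
    (x z : Fin N → ℝ)
    (S₂ Snabla : Finset (Fin N))
    (hxsupp : ∃ T : Finset (Fin N), T.card = s₁ ∧ ∀ i, x i ≠ 0 ↔ i ∈ T)
    (hS₂ : S₂.card = s₂ ∧ ∀ i, z i ≠ 0 ↔ i ∈ S₂)
    (hsub : Snabla ⊆ S₂)
    (hcard : Snabla.card = s₂ - s₁)
    (hsmall : ∀ i ∈ Snabla, ∀ j ∈ S₂ \ Snabla, |z i| ≤ |z j|) :
    vecEnorm (restrict x Snabla) ≤ Real.sqrt 2 * vecEnorm (restrict (x - z) S₂) ∧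
    Real.sqrt 2 * vecEnorm (restrict (x - z) S₂) ≤ Real.sqrt 2 * vecEnorm (x - z) := by
  obtain ⟨T, hTcard, hxT⟩ := hxsupp
  have hcard_sdiff : #(S₂ \ Snabla) = s₁ := by
    rw [card_sdiff_of_subset hsub, hcard, hS₂.1, Nat.sub_sub_self hs]
  have hsum := sum_sq_le_two_mul_sum_sq_sub (fun i hi => not_not.mp (mt (hxT i).mp hi))
    (hTcard.trans hcard_sdiff.symm).le hsub hsmall
  refine ⟨?_, mul_le_mul_of_nonneg_left (vecEnorm_restrict_le _ _) (Real.sqrt_nonneg 2)⟩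
  rw [vecEnorm_restrict, vecEnorm_restrict, ← Real.sqrt_mul zero_le_two]
  exact Real.sqrt_le_sqrt hsum
end

section
/- Suppose for all l, y_l = A x + e_l, all blocks x̃_l are s-sparse with support equal to supp(x) of size s, and each x̃_l satisfies ‖y_l − A x̃_l‖ ≤ ‖e_l‖. If A has RIC δ_{2s} < 1, H is doubly stochastic, x̌_l = Σ_r h_{lr} x̃_r, and x̂_l is the best s-sparse approximation of x̌_l, then with stacked vectors x̲ = (x,…,x), x̲̂ = (x̂_1,…,x̂_L), e̲ = (e_1,…,e_L): ‖x̲ − x̲̂‖ ≤ (4/√(1 − δ_{2s}))·‖e̲‖. -/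
/-- Euclidean norm of a finitely-indexed real vector. -/
noncomputable def eucNorm {ι : Type*} [Fintype ι] (v : ι → ℝ) : ℝ :=
  Real.sqrt (∑ i, v i ^ 2)

/-- `v` is `k`-sparse: at most `k` nonzero entries. -/
def sparse {ι : Type*} [Fintype ι] (k : ℕ) (v : ι → ℝ) : Prop :=
  ∃ T : Finset ι, T.card ≤ k ∧ ∀ i ∉ T, v i = 0

/-- `δ` is a restricted isometry constant of order `k` for `A`. -/
def RIPwith {M N : ℕ} (A : Matrix (Fin M) (Fin N) ℝ) (k : ℕ) (δ : ℝ) : Prop :=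
  ∀ v : Fin N → ℝ, sparse k v →
    (1 - δ) * eucNorm v ^ 2 ≤ eucNorm (A.mulVec v) ^ 2 ∧
    eucNorm (A.mulVec v) ^ 2 ≤ (1 + δ) * eucNorm v ^ 2

/-! Each local estimate `x̃ r` differs from `x` by a `2s`-sparse vector, so the RIP and the
residual bound give `‖x - x̃ r‖ ≤ 2‖e r‖ / √(1 - δ)`. Mixing by a doubly stochastic `H` cannot
increase the stacked error (Jensen for `‖·‖²`, then the column sums), and since `x` is itself
`s`-sparse, a best `s`-sparse approximation of `x̌ l` lies at most twice as far from `x` as `x̌ l`. -/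

open Finset Matrix

section eucNorm

variable {ι κ : Type*} [Fintype ι] [Fintype κ]

lemma eucNorm_eq_norm_toLp (v : ι → ℝ) : eucNorm v = ‖WithLp.toLp 2 v‖ := by
  simp [eucNorm, EuclideanSpace.norm_eq]

lemma eucNorm_nonneg (v : ι → ℝ) : 0 ≤ eucNorm v :=
  Real.sqrt_nonneg _

lemma eucNorm_sq (v : ι → ℝ) : eucNorm v ^ 2 = ∑ i, v i ^ 2 :=
  Real.sq_sqrt (sum_nonneg fun _ _ => sq_nonneg _)

lemma eucNorm_sub_le (u v : ι → ℝ) : eucNorm (u - v) ≤ eucNorm u + eucNorm v := by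
  simpa only [eucNorm_eq_norm_toLp, WithLp.toLp_sub] using norm_sub_le _ _

lemma eucNorm_sub_eq_dist (u v : ι → ℝ) :
    eucNorm (u - v) = dist (WithLp.toLp 2 u) (WithLp.toLp 2 v) := by
  rw [dist_eq_norm, eucNorm_eq_norm_toLp, WithLp.toLp_sub]

lemma eucNorm_uncurry_sq (v : ι → κ → ℝ) :
    eucNorm (fun p : ι × κ => v p.1 p.2) ^ 2 = ∑ i, eucNorm (v i) ^ 2 := by
  simp only [eucNorm_sq, Fintype.sum_prod_type]

end eucNorm

section sparse

variable {ι : Type*} [Fintype ι]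

lemma sparse_of_ne_zero_mem {k : ℕ} {v : ι → ℝ} {T : Finset ι} (hT : T.card ≤ k)
    (hv : ∀ i, v i ≠ 0 → i ∈ T) : sparse k v :=
  ⟨T, hT, fun i hi => by_contra fun h => hi (hv i h)⟩

lemma sparse.sub {k m : ℕ} {u v : ι → ℝ} (hu : sparse k u) (hv : sparse m v) :
    sparse (k + m) (u - v) := by
  classical
  obtain ⟨T, hT, huT⟩ := hu
  obtain ⟨T', hT', hvT'⟩ := hv
  refine ⟨T ∪ T', (card_union_le T T').trans (add_le_add hT hT'), fun i hi => ?_⟩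
  rw [mem_union, not_or] at hi
  simp [huT i hi.1, hvT' i hi.2]

end sparse

lemma RIPwith.eucNorm_le_div_sqrt {M N k : ℕ} {A : Matrix (Fin M) (Fin N) ℝ} {δ : ℝ}
    (hA : RIPwith A k δ) (hδ : δ < 1) {v : Fin N → ℝ} (hv : sparse k v) :
    eucNorm v ≤ eucNorm (A *ᵥ v) / √(1 - δ) := by
  have hsq : (√(1 - δ) * eucNorm v) ^ 2 ≤ eucNorm (A *ᵥ v) ^ 2 := by
    rw [mul_pow, Real.sq_sqrt (by linarith)]
    exact (hA v hv).1
  rw [le_div_iff₀' (Real.sqrt_pos.2 (by linarith))]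
  exact (pow_le_pow_iff_left₀ (by positivity [eucNorm_nonneg v]) (eucNorm_nonneg _)
    two_ne_zero).1 hsq


lemma eucNorm_mulVec_sub_le_two_mul {M N : ℕ} {A : Matrix (Fin M) (Fin N) ℝ} {x z : Fin N → ℝ}
    {y e : Fin M → ℝ} (hy : y = A *ᵥ x + e) (hres : eucNorm (y - A *ᵥ z) ≤ eucNorm e) :
    eucNorm (A *ᵥ (x - z)) ≤ 2 * eucNorm e := by
  have hsplit : A *ᵥ (x - z) = (y - A *ᵥ z) - e := by
    rw [hy, mulVec_sub]
    abel
  calc eucNorm (A *ᵥ (x - z)) ≤ eucNorm (y - A *ᵥ z) + eucNorm e := hsplit ▸ eucNorm_sub_le _ _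
    _ ≤ 2 * eucNorm e := by linarith

lemma dist_le_two_mul_dist_of_dist_le {α : Type*} [PseudoMetricSpace α] {x c h : α}
    (hbest : dist c h ≤ dist c x) : dist x h ≤ 2 * dist x c :=
  calc dist x h ≤ dist x c + dist c h := dist_triangle x c h
    _ ≤ dist x c + dist c x := by gcongr
    _ = 2 * dist x c := by rw [dist_comm c x, two_mul]

lemma norm_sum_smul_sq_le {E ι : Type*} [SeminormedAddCommGroup E] [NormedSpace ℝ E]
    {t : Finset ι} {w : ι → ℝ} (h₀ : ∀ i ∈ t, 0 ≤ w i) (h₁ : ∑ i ∈ t, w i = 1) (v : ι → E) :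
    ‖∑ i ∈ t, w i • v i‖ ^ 2 ≤ ∑ i ∈ t, w i * ‖v i‖ ^ 2 :=
  (convexOn_univ_norm.pow (fun _ _ => norm_nonneg _) 2).map_sum_le h₀ h₁ fun _ _ => Set.mem_univ _

lemma sum_norm_sum_smul_sq_le_of_mem_doublyStochastic {E n : Type*} [SeminormedAddCommGroup E]
    [NormedSpace ℝ E] [Fintype n] [DecidableEq n] {H : Matrix n n ℝ}
    (hH : H ∈ doublyStochastic ℝ n) (v : n → E) :
    ∑ l, ‖∑ r, H l r • v r‖ ^ 2 ≤ ∑ r, ‖v r‖ ^ 2 :=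
  calc ∑ l, ‖∑ r, H l r • v r‖ ^ 2 ≤ ∑ l, ∑ r, H l r * ‖v r‖ ^ 2 :=
        sum_le_sum fun l _ => norm_sum_smul_sq_le
          (fun _ _ => nonneg_of_mem_doublyStochastic hH) (sum_row_of_mem_doublyStochastic hH l) v
    _ = ∑ r, ‖v r‖ ^ 2 := by
        rw [sum_comm]
        simp only [← sum_mul, sum_col_of_mem_doublyStochastic hH, one_mul]

lemma sub_sum_smul_eq_sum_smul_sub {R V ι : Type*} [Ring R] [AddCommGroup V] [Module R V]
    {t : Finset ι} {w : ι → R} (hw : ∑ i ∈ t, w i = 1) (x : V) (z : ι → V) :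
    x - ∑ i ∈ t, w i • z i = ∑ i ∈ t, w i • (x - z i) := by
  simp only [smul_sub, sum_sub_distrib, ← sum_smul, hw, one_smul]

lemma sum_eucNorm_sub_sum_smul_sq_le_of_mem_doublyStochastic {ι n : Type*} [Fintype ι]
    [Fintype n] [DecidableEq n] {H : Matrix n n ℝ} (hH : H ∈ doublyStochastic ℝ n)
    (x : ι → ℝ) (z : n → ι → ℝ) :
    ∑ l, eucNorm (x - ∑ r, H l r • z r) ^ 2 ≤ ∑ r, eucNorm (x - z r) ^ 2 := by
  simp only [sub_sum_smul_eq_sum_smul_sub (sum_row_of_mem_doublyStochastic hH _),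
    eucNorm_eq_norm_toLp, WithLp.toLp_sum, WithLp.toLp_smul]
  exact sum_norm_sum_smul_sq_le_of_mem_doublyStochastic hH _

theorem stacked_error_bound_general {L M N : ℕ} (s : ℕ)
    (A : Matrix (Fin M) (Fin N) ℝ)
    (x : Fin N → ℝ) (e : Fin L → (Fin M → ℝ)) (y : Fin L → (Fin M → ℝ))
    (hy : ∀ l, y l = A.mulVec x + e l)
    (S : Finset (Fin N)) (hScard : S.card = s) (hSsupp : ∀ i, x i ≠ 0 ↔ i ∈ S)
    (δ : ℝ) (hδ : RIPwith A (2 * s) δ) (hδlt : δ < 1)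
    (H : Matrix (Fin L) (Fin L) ℝ)
    (hpos : ∀ l r, 0 ≤ H l r)
    (hrow : ∀ l, ∑ r, H l r = 1)
    (hcol : ∀ r, ∑ l, H l r = 1)
    (xtilde : Fin L → (Fin N → ℝ))
    (hxtsupp : ∀ l i, xtilde l i ≠ 0 ↔ i ∈ S)
    (hres : ∀ l, eucNorm (y l - A.mulVec (xtilde l)) ≤ eucNorm (e l))
    (xcheck : Fin L → (Fin N → ℝ))
    (hxcheck : ∀ l, xcheck l = ∑ r, H l r • xtilde r)
    (xhat : Fin L → (Fin N → ℝ))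
    (hxhat_best : ∀ l, ∀ z : Fin N → ℝ, sparse s z →
      eucNorm (xcheck l - xhat l) ≤ eucNorm (xcheck l - z)) :
    eucNorm (fun p : Fin L × Fin N => x p.2 - xhat p.1 p.2) ≤
      4 / Real.sqrt (1 - δ) * eucNorm (fun p : Fin L × Fin M => e p.1 p.2) := by
  have hx : sparse s x := sparse_of_ne_zero_mem hScard.le fun i => (hSsupp i).1
  have htilde : ∀ r, eucNorm (x - xtilde r) ≤ 2 / √(1 - δ) * eucNorm (e r) := fun r => by
    have hsp : sparse (2 * s) (x - xtilde r) :=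
      two_mul s ▸ hx.sub (sparse_of_ne_zero_mem hScard.le fun i => (hxtsupp r i).1)
    calc eucNorm (x - xtilde r) ≤ eucNorm (A *ᵥ (x - xtilde r)) / √(1 - δ) :=
          hδ.eucNorm_le_div_sqrt hδlt hsp
      _ ≤ 2 * eucNorm (e r) / √(1 - δ) := by
          gcongr; exact eucNorm_mulVec_sub_le_two_mul (hy r) (hres r)
      _ = 2 / √(1 - δ) * eucNorm (e r) := by ring
  have hhat : ∀ l, eucNorm (x - xhat l) ≤ 2 * eucNorm (x - xcheck l) := fun l => by
    simpa only [eucNorm_sub_eq_dist] using dist_le_two_mul_dist_of_dist_le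
      (by simpa only [eucNorm_sub_eq_dist] using hxhat_best l x hx)
  have hcheck : ∑ l, eucNorm (x - xcheck l) ^ 2 ≤ ∑ r, eucNorm (x - xtilde r) ^ 2 := by
    simpa only [hxcheck] using sum_eucNorm_sub_sum_smul_sq_le_of_mem_doublyStochastic
      (mem_doublyStochastic_iff_sum.2 ⟨hpos, hrow, hcol⟩) x xtilde
  refine (pow_le_pow_iff_left₀ (eucNorm_nonneg _)
    (mul_nonneg (by positivity) (eucNorm_nonneg _)) two_ne_zero).1 ?_
  calc eucNorm (fun p : Fin L × Fin N => x p.2 - xhat p.1 p.2) ^ 2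
      = ∑ l, eucNorm (x - xhat l) ^ 2 := eucNorm_uncurry_sq fun l => x - xhat l
    _ ≤ ∑ l, 2 ^ 2 * eucNorm (x - xcheck l) ^ 2 := by
        gcongr with l
        rw [← mul_pow]
        exact pow_le_pow_left₀ (eucNorm_nonneg _) (hhat l) 2
    _ ≤ 2 ^ 2 * ∑ r, eucNorm (x - xtilde r) ^ 2 := by rw [← mul_sum]; gcongr
    _ ≤ 2 ^ 2 * ∑ r, (2 / √(1 - δ)) ^ 2 * eucNorm (e r) ^ 2 := by
        gcongr with r
        rw [← mul_pow]
        exact pow_le_pow_left₀ (eucNorm_nonneg _) (htilde r) 2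
    _ = (4 / √(1 - δ) * eucNorm (fun p : Fin L × Fin M => e p.1 p.2)) ^ 2 := by
        rw [mul_pow, eucNorm_uncurry_sq, ← mul_sum, ← mul_assoc]
        ring

/-- Doubly-stochastic fusion bound for DHTP: if `y l = A x + e l`, each `x̃ l` is
`s`-sparse with support equal to `supp x` (of size `s`) and satisfies
`‖y l − A x̃ l‖ ≤ ‖e l‖`, `A` has RIC `δ_{2s} < 1`, `H` is doubly stochastic,
`x̌ l = ∑ r, h l r • x̃ r` and `x̂ l` is a best `s`-sparse approximation of `x̌ l`,
then for the stacked vectors `‖x̲ − x̲̂‖ ≤ (4/√(1 − δ_{2s}))·‖e̲‖`. -/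
theorem stacked_error_bound {L M N : ℕ} (s : ℕ)
    (A : Matrix (Fin M) (Fin N) ℝ)
    (x : Fin N → ℝ) (e : Fin L → (Fin M → ℝ)) (y : Fin L → (Fin M → ℝ))
    (hy : ∀ l, y l = A.mulVec x + e l)
    (S : Finset (Fin N)) (hScard : S.card = s) (hSsupp : ∀ i, x i ≠ 0 ↔ i ∈ S)
    (δ : ℝ) (hδ : RIPwith A (2 * s) δ) (hδlt : δ < 1)
    (H : Matrix (Fin L) (Fin L) ℝ)
    (hpos : ∀ l r, 0 ≤ H l r)
    (hrow : ∀ l, ∑ r, H l r = 1)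
    (hcol : ∀ r, ∑ l, H l r = 1)
    (xtilde : Fin L → (Fin N → ℝ))
    (hxtsupp : ∀ l i, xtilde l i ≠ 0 ↔ i ∈ S)
    (hres : ∀ l, eucNorm (y l - A.mulVec (xtilde l)) ≤ eucNorm (e l))
    (xcheck : Fin L → (Fin N → ℝ))
    (hxcheck : ∀ l, xcheck l = ∑ r, H l r • xtilde r)
    (xhat : Fin L → (Fin N → ℝ))
    (hxhat_sparse : ∀ l, sparse s (xhat l))
    (hxhat_best : ∀ l, ∀ z : Fin N → ℝ, sparse s z →
      eucNorm (xcheck l - xhat l) ≤ eucNorm (xcheck l - z)) :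
    eucNorm (fun p : Fin L × Fin N => x p.2 - xhat p.1 p.2) ≤
      4 / Real.sqrt (1 - δ) * eucNorm (fun p : Fin L × Fin M => e p.1 p.2) :=
  stacked_error_bound_general s A x e y hy S hScard hSsupp δ hδ hδlt H hpos hrow hcol xtilde hxtsupp
    hres xcheck hxcheck xhat hxhat_best
end
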